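/- (Waring–Stirling formula.) For all real numbers z, w with z > 0 and z − w > 0, the series Σ_{n=0}^{∞} (w)_n/(z)_{n+1} converges and its sum equals 1/(z − w). -/

import Mathlib

open Filter Finset Topology

/-- The Pochhammer symbol `(x)_j = x(x+1)⋯(x+j−1)`, with `(x)_0 = 1`. -/
noncomputable def poch (x : ℝ) (j : ℕ) : ℝ := ∏ i ∈ Finset.range j, (x + i)

lemma poch_zero (x : ℝ) : poch x 0 = 1 := by simp [poch]

lemma poch_succ (x : ℝ) (n : ℕ) : poch x (n + 1) = poch x n * (x + n) :=
  Finset.prod_range_succ _ _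

lemma poch_pos {x : ℝ} (hx : 0 < x) (n : ℕ) : 0 < poch x n :=
  Finset.prod_pos fun i _ => by positivity

lemma poch_add (x : ℝ) (m k : ℕ) :
    poch x (m + k) = poch x m * ∏ i ∈ Finset.range k, (x + (m + i)) := by
  unfold poch
  rw [Finset.prod_range_add]
  push_cast
  rfl

/-- Waring–Stirling formula: for real `z > 0` with `z − w > 0`, the series
`Σ_{n=0}^{∞} (w)_n/(z)_{n+1}` converges to `1/(z − w)`. -/
theorem waring_stirling_formula (z w : ℝ) (hz : 0 < z) (hzw : 0 < z - w) :
    HasSum (fun n : ℕ => poch w n / poch z (n + 1)) (1 / (z - w)) := by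
  obtain ⟨m, hm⟩ := exists_nat_gt (-w)
  have hwm : (0:ℝ) < w + m := by linarith
  set f : ℕ → ℝ := fun n => poch w n / poch z (n + 1) with hf
  set a : ℕ → ℝ := fun n => poch w n / poch z n with ha
  have hzpos : ∀ n, (0:ℝ) < poch z n := poch_pos hz
  have hzn : ∀ n : ℕ, (0:ℝ) < z + n := fun n => by positivity
  have hterm : ∀ n, f n = (a n - a (n + 1)) / (z - w) := by
    intro n
    simp only [hf, ha, poch_succ]
    have h1 := (hzpos n).ne'
    have h2 := (hzn n).ne'
    have h3 : z - w ≠ 0 := hzw.ne'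
    field_simp
    ring
  have hS : ∀ N, ∑ n ∈ Finset.range N, f n = (1 - a N) / (z - w) := by
    intro N
    calc ∑ n ∈ Finset.range N, f n
        = ∑ n ∈ Finset.range N, (a n - a (n + 1)) / (z - w) := by
          exact Finset.sum_congr rfl fun n _ => hterm n
      _ = (∑ n ∈ Finset.range N, (a n - a (n + 1))) / (z - w) := by
          rw [Finset.sum_div]
      _ = (a 0 - a N) / (z - w) := by rw [Finset.sum_range_sub' a N]
      _ = (1 - a N) / (z - w) := by simp [ha, poch_zero]
  by_cases h0 : poch w m = 0
  · have hzero : ∀ n ∉ Finset.range m, f n = 0 := by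
      intro n hn
      have hnm : m ≤ n := by simpa using hn
      obtain ⟨k, rfl⟩ := Nat.exists_eq_add_of_le hnm
      have : poch w (m + k) = 0 := by rw [poch_add, h0, zero_mul]
      simp [hf, this]
    have h := hasSum_sum_of_ne_finset_zero (L := SummationFilter.unconditional ℕ) hzero
    have ham : a m = 0 := by simp [ha, h0]
    rwa [hS m, ham, sub_zero] at h
  · set ε : ℝ := if 0 < poch w m then 1 else -1 with hε
    have hε2 : ε * ε = 1 := by
      by_cases h : 0 < poch w m <;> simp [hε, h]
    have hεp : 0 < ε * poch w m := by
      by_cases h : 0 < poch w m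
      · simp [hε, h]
      · have : poch w m < 0 := lt_of_le_of_ne (not_lt.mp h) h0
        simp only [hε, if_neg h]
        nlinarith
    have hQpos : ∀ n : ℕ, 0 < ∏ i ∈ Finset.range n, (w + (↑m + ↑i)) := by
      intro n
      apply Finset.prod_pos
      intro i _
      have : (0:ℝ) ≤ i := Nat.cast_nonneg i
      linarith
    have hnonneg : ∀ n : ℕ, 0 ≤ ε * f (n + m) := by
      intro n
      have hpw : poch w (n + m) = poch w m * ∏ i ∈ Finset.range n, (w + (↑m + ↑i)) := by
        rw [add_comm, poch_add]
      have h1 : ε * f (n + m)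
          = (ε * poch w m) * (∏ i ∈ Finset.range n, (w + (↑m + ↑i))) / poch z (n + m + 1) := by
        simp only [hf, hpw]; ring
      rw [h1]
      exact div_nonneg (mul_nonneg hεp.le (hQpos n).le) (hzpos _).le
    set P : ℕ → ℝ := fun N => ∏ i ∈ Finset.range N, ((w + (↑m + ↑i)) / (z + (↑m + ↑i))) with hP
    have haP : ∀ N, a (m + N) = a m * P N := by
      intro N
      simp only [ha, hP, poch_add, Finset.prod_div_distrib, div_mul_div_comm]
    have hP0 : ∀ N, 0 ≤ P N := by
      intro N
      apply Finset.prod_nonneg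
      intro i _
      have hi : (0:ℝ) ≤ i := Nat.cast_nonneg i
      apply div_nonneg <;> [skip; skip] <;> linarith
    have hc : (0:ℝ) < (z - w) / (z + m + 1) := by
      apply div_pos hzw; positivity
    have hPle : ∀ N, P N ≤
        Real.exp (-((z - w) / (z + m + 1) * ∑ i ∈ Finset.range N, (1:ℝ)/(i+1))) := by
      intro N
      have hrw : -((z - w) / (z + m + 1) * ∑ i ∈ Finset.range N, (1:ℝ)/(i+1))
          = ∑ i ∈ Finset.range N, (-((z - w) / ((z + m + 1) * (i + 1)))) := by
        rw [Finset.mul_sum, ← Finset.sum_neg_distrib]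
        exact Finset.sum_congr rfl fun i _ => by rw [div_mul_div_comm, mul_one]
      rw [hrw, Real.exp_sum]
      apply Finset.prod_le_prod
      · intro i _
        have hi : (0:ℝ) ≤ i := Nat.cast_nonneg i
        apply div_nonneg <;> [skip; skip] <;> linarith
      · intro i _
        have hi : (0:ℝ) ≤ i := Nat.cast_nonneg i
        have hzi : (0:ℝ) < z + (↑m + ↑i) := by
          have : (0:ℝ) ≤ m := Nat.cast_nonneg m
          linarith
        have step1 : (w + (↑m + ↑i)) / (z + (↑m + ↑i)) ≤ Real.exp (-((z - w) / (z + (↑m + ↑i)))) := by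
          have h := Real.add_one_le_exp (-((z - w) / (z + (↑m + ↑i))))
          have heq : (w + (↑m + ↑i)) / (z + (↑m + ↑i)) = -((z - w) / (z + (↑m + ↑i))) + 1 := by
            field_simp
            ring
          rw [heq]; exact h
        refine step1.trans (Real.exp_le_exp.mpr ?_)
        rw [neg_le_neg_iff]
        apply div_le_div_of_nonneg_left hzw.le hzi
        nlinarith [Nat.cast_nonneg (α := ℝ) m, Nat.cast_nonneg (α := ℝ) i]
    have hHlim := Real.tendsto_sum_range_one_div_nat_succ_atTop
    have hexp : Tendsto (fun N : ℕ =>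
        Real.exp (-((z - w) / (z + m + 1) * ∑ i ∈ Finset.range N, (1:ℝ)/(i+1))))
        atTop (𝓝 0) :=
      Real.tendsto_exp_neg_atTop_nhds_zero.comp (Tendsto.const_mul_atTop hc hHlim)
    have hPlim : Tendsto P atTop (𝓝 0) :=
      tendsto_of_tendsto_of_tendsto_of_le_of_le tendsto_const_nhds hexp hP0 hPle
    have haLim : Tendsto (fun N => a (m + N)) atTop (𝓝 0) := by
      simp only [haP]
      have h := hPlim.const_mul (a m)
      rwa [mul_zero] at h
    have hT : ∀ N, ∑ n ∈ Finset.range N, ε * f (n + m)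
        = ε * ((a m - a (m + N)) / (z - w)) := by
      intro N
      rw [← Finset.mul_sum]
      congr 1
      have e1 : ∑ n ∈ Finset.range N, f (n + m) = ∑ n ∈ Finset.range N, f (m + n) :=
        Finset.sum_congr rfl fun n _ => by rw [add_comm]
      have e2 := hS (m + N)
      rw [Finset.sum_range_add, hS m] at e2
      have e3 : ∑ n ∈ Finset.range N, f (m + n)
          = (1 - a (m + N)) / (z - w) - (1 - a m) / (z - w) := by linarith
      rw [e1, e3, div_sub_div_same]
      congr 1
      ring
    have hTlim : Tendsto (fun N => ∑ n ∈ Finset.range N, ε * f (n + m)) atTop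
        (𝓝 (ε * (a m / (z - w)))) := by
      simp only [hT]
      have h1 : Tendsto (fun N => (a m - a (m + N)) / (z - w)) atTop (𝓝 (a m / (z - w))) := by
        have h2 : Tendsto (fun N => (a m - a (m + N)) / (z - w)) atTop
            (𝓝 ((a m - 0) / (z - w))) :=
          (Filter.Tendsto.sub tendsto_const_nhds haLim).div_const (z - w)
        simpa using h2
      exact h1.const_mul ε
    have hhs : HasSum (fun n => ε * f (n + m)) (ε * (a m / (z - w))) :=
      (hasSum_iff_tendsto_nat_of_nonneg hnonneg _).mpr hTlim
    have hhs2 : HasSum (fun n => f (n + m)) (a m / (z - w)) := by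
      have h := hhs.mul_left ε
      simpa only [← mul_assoc, hε2, one_mul] using h
    have hfin := (hasSum_nat_add_iff m).mp hhs2
    rw [hS m] at hfin
    have : a m / (z - w) + (1 - a m) / (z - w) = 1 / (z - w) := by
      rw [← add_div]
      congr 1
      ring
    rwa [this] at hfin
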